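/- Assume q is uniformly Lipschitz continuous in (μ,a) with Lipschitz constant L_q, and F, G are bounded by a constant C₀ and uniformly continuous in (μ,a) with modulus of continuity ρ. Then for any L ≥ 0 there exists a modulus of continuity ρ_L, depending only on T, |𝕊|, L_q, C₀, ρ and L, such that for any t ∈ 𝕋, x⃗ ∈ 𝕊^N₀, μ ∈ 𝒫₀(𝕊), α, α̃ ∈ 𝒜^L_state and i ∈ {1,…,N}: |J_i(t,x⃗,(α,α̃)_i) − J(t,μ,α;x_i,α̃)| + |v^{N,L}_i(t,x⃗,α) − v(μ^α;t,x_i)| ≤ ρ_L(θ_N), where θ_N := W₁(μ^N_{x⃗},μ) + 1/√N. -/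

import Mathlib

/-!
Statement 3 (Theorem 3.3, convergence of empirical measures for the `N`-player game
with homogeneous controls).

Finite-state mean field game; probability measures on the finite state space `S`
are encoded as functions `S → ℝ` (`IsProb`), with `W₁(μ,ν) = ∑_x |μ x − ν x|`.
Controls may depend on the current measure: `α : ℕ → S → (S → ℝ) → A`, and
`𝒜^L_state` is the class of such controls that are `L`-Lipschitz in the measure.
-/

open Finset

namespace MFGSetValue

variable {S A : Type*} [Fintype S] [DecidableEq S]

/-- A probability vector on the finite state space `S`. -/
def IsProb (μ : S → ℝ) : Prop := (∀ x, 0 ≤ μ x) ∧ ∑ x, μ x = 1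

/-- `W₁` distance (total-variation type) between two measures on `S`. -/
noncomputable def W1 (μ ν : S → ℝ) : ℝ := ∑ x, |μ x - ν x|

section Metric
variable [PseudoMetricSpace A]

/-- `α ∈ 𝒜^L_state`: measure-dependent controls, `L`-Lipschitz in the measure. -/
def LipCtrl (L : ℝ) (α : ℕ → S → (S → ℝ) → A) : Prop :=
  ∀ s x μ ν, dist (α s x μ) (α s x ν) ≤ L * W1 μ ν

end Metric

/-- The mean-field measure flow `μ^α` for a measure-dependent control `α`:
`μ^α_t = μ`, `μ^α_{s+1}(y) = ∑_x μ^α_s(x) q(s,x,μ^α_s,α(s,x,μ^α_s);y)`. -/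
noncomputable def flowM (q : ℕ → S → (S → ℝ) → A → S → ℝ)
    (α : ℕ → S → (S → ℝ) → A) (t : ℕ) (μ : S → ℝ) : ℕ → S → ℝ
  | 0 => μ
  | s + 1 =>
    if s + 1 ≤ t then μ
    else fun y => ∑ x, flowM q α t μ s x *
      q s x (flowM q α t μ s) (α s x (flowM q α t μ s)) y

/-- The law at each time of the Markov chain `ℙ^{μ^α; t, x₀, α̃}` started from `x₀`
at time `t`, with transitions `q(s,·,ν_s,α̃(s,·,ν_s);·)` against the flow `ν`. -/
noncomputable def chainM (q : ℕ → S → (S → ℝ) → A → S → ℝ) (ν : ℕ → S → ℝ)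
    (αt : ℕ → S → (S → ℝ) → A) (t : ℕ) (x₀ : S) : ℕ → S → ℝ
  | 0 => fun x => if x = x₀ then 1 else 0
  | s + 1 =>
    if s + 1 ≤ t then fun x => if x = x₀ then 1 else 0
    else fun y => ∑ x, chainM q ν αt t x₀ s x * q s x (ν s) (αt s x (ν s)) y

/-- The empirical measure `μ^N_{x⃗}` of a configuration `x⃗ ∈ 𝕊^N`. -/
noncomputable def emp {N : ℕ} (xv : Fin N → S) : S → ℝ :=
  fun x => (∑ i, if xv i = x then (1 : ℝ) else 0) / N

/-- The joint law `ℙ^{t,x⃗,α⃗}` of the `N`-player state process: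
`X⃗_t = x⃗` and independent transitions `q(s, x_i, μ^N_s, α^i(s,x_i,μ^N_s); ·)`. -/
noncomputable def jointFlow (q : ℕ → S → (S → ℝ) → A → S → ℝ) {N : ℕ}
    (αv : Fin N → ℕ → S → (S → ℝ) → A) (t : ℕ) (xv : Fin N → S) :
    ℕ → (Fin N → S) → ℝ
  | 0 => fun z => if z = xv then 1 else 0
  | s + 1 =>
    if s + 1 ≤ t then fun z => if z = xv then 1 else 0
    else fun z => ∑ w : Fin N → S, jointFlow q αv t xv s w *
      ∏ i, q s (w i) (emp w) (αv i s (w i) (emp w)) (z i)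

/-- The `N`-tuple `(α, α̃)_i`: player `i` uses `α̃`, all others use `α`. -/
def replaceI {N : ℕ} (α αt : ℕ → S → (S → ℝ) → A) (i : Fin N) :
    Fin N → ℕ → S → (S → ℝ) → A :=
  fun j => if j = i then αt else α


/-- The mean field game cost `J(t,μ,α;x₀,α̃) = E[G(X_T,μ^α_T) + ∑_{s=t}^{T-1} F(…)]`
for measure-dependent controls, against the flow `ν`. -/
noncomputable def costM (q : ℕ → S → (S → ℝ) → A → S → ℝ)
    (F : ℕ → S → (S → ℝ) → A → ℝ) (G : S → (S → ℝ) → ℝ) (T : ℕ)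
    (ν : ℕ → S → ℝ) (t : ℕ) (x₀ : S) (αt : ℕ → S → (S → ℝ) → A) : ℝ :=
  (∑ x, chainM q ν αt t x₀ T x * G x (ν T)) +
    ∑ s ∈ Finset.Ico t T, ∑ x, chainM q ν αt t x₀ s x * F s x (ν s) (αt s x (ν s))

/-- The value `v(ν; t, x₀) = inf_{α̃} J(ν; t, x₀, α̃)` over admissible controls. -/
noncomputable def valueM (q : ℕ → S → (S → ℝ) → A → S → ℝ)
    (F : ℕ → S → (S → ℝ) → A → ℝ) (G : S → (S → ℝ) → ℝ) (T : ℕ)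
    (ν : ℕ → S → ℝ) (t : ℕ) (x₀ : S) : ℝ :=
  sInf { r : ℝ | ∃ αt : ℕ → S → (S → ℝ) → A, r = costM q F G T ν t x₀ αt }

/-- The cost `J_i(t,x⃗,α⃗)` of player `i` in the `N`-player game. -/
noncomputable def Ji (q : ℕ → S → (S → ℝ) → A → S → ℝ)
    (F : ℕ → S → (S → ℝ) → A → ℝ) (G : S → (S → ℝ) → ℝ) (T : ℕ) {N : ℕ}
    (t : ℕ) (xv : Fin N → S) (αv : Fin N → ℕ → S → (S → ℝ) → A) (i : Fin N) : ℝ :=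
  (∑ w : Fin N → S, jointFlow q αv t xv T w * G (w i) (emp w)) +
    ∑ s ∈ Finset.Ico t T, ∑ w : Fin N → S,
      jointFlow q αv t xv s w * F s (w i) (emp w) (αv i s (w i) (emp w))

section Metric
variable [PseudoMetricSpace A]

/-- `v^{N,L}_i(t,x⃗,α) = inf_{α̃ ∈ 𝒜^L_state} J_i(t,x⃗,(α,α̃)_i)`. -/
noncomputable def vNi (q : ℕ → S → (S → ℝ) → A → S → ℝ)
    (F : ℕ → S → (S → ℝ) → A → ℝ) (G : S → (S → ℝ) → ℝ) (T : ℕ) (L : ℝ) {N : ℕ}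
    (t : ℕ) (xv : Fin N → S) (α : ℕ → S → (S → ℝ) → A) (i : Fin N) : ℝ :=
  sInf { r : ℝ | ∃ αt : ℕ → S → (S → ℝ) → A,
    LipCtrl L αt ∧ r = Ji q F G T t xv (replaceI α αt i) i }

end Metric

end MFGSetValue

open MFGSetValue

/-!
Couple the `N`-player game with the mean-field flow `μ^α` through
`m_s = E W1(μ^N_s, μ^α_s)`. Given the configuration at time `s`, the next states are
independent, so the empirical measure concentrates (`≤ |S| / (2√N)`, a variance bound in each
state) around the average of the players' transition laws. That average differs by `2 / N` from
the mean-field step applied to `μ^N_s`, since only player `i` deviates, and the Lipschitz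
dependence of `q` on `(μ, a)` gives `m_{s+1} ≤ (1 + c) m_s + D / √N`; hence `m_s ≲ θ_N`.
The law of player `i` then stays within `c Σ_r m_r` of the mean-field chain of `α̃`, and the
costs are compared term by term. The value functions are compared through the costs, since
against the fixed flow `μ^α` every control can be replaced by a `0`-Lipschitz one.
-/

namespace MFGSetValue

variable {S A : Type*} [Fintype S]

section FiniteProbability

variable {ι : Type*} [Fintype ι]

lemma W1_nonneg (μ ν : S → ℝ) : 0 ≤ W1 μ ν := sum_nonneg fun _ _ => abs_nonneg _

lemma W1_triangle (μ ν ξ : S → ℝ) : W1 μ ξ ≤ W1 μ ν + W1 ν ξ := by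
  rw [W1, W1, W1, ← sum_add_distrib]
  exact sum_le_sum fun x _ => abs_sub_le _ _ _

lemma isProb_indicator [DecidableEq ι] (x₀ : ι) : IsProb (fun x => if x = x₀ then (1 : ℝ) else 0) :=
  ⟨fun x => by positivity, by simp⟩

lemma IsProb.bind {p : ι → ℝ} {k : ι → S → ℝ} (hp : IsProb p) (hk : ∀ x, IsProb (k x)) :
    IsProb (fun y => ∑ x, p x * k x y) := by
  refine ⟨fun y => sum_nonneg fun x _ => mul_nonneg (hp.1 x) ((hk x).1 y), ?_⟩
  rw [sum_comm]
  simp_rw [← mul_sum, (hk _).2, mul_one, hp.2]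

lemma IsProb.abs_sum_mul_le {p f : ι → ℝ} (hp : IsProb p) {C : ℝ} (hf : ∀ x, |f x| ≤ C) :
    |∑ x, p x * f x| ≤ C := by
  calc |∑ x, p x * f x| ≤ ∑ x, p x * C := by
        refine (abs_sum_le_sum_abs _ _).trans (sum_le_sum fun x _ => ?_)
        rw [abs_mul, abs_of_nonneg (hp.1 x)]
        exact mul_le_mul_of_nonneg_left (hf x) (hp.1 x)
    _ = C := by rw [← sum_mul, hp.2, one_mul]

lemma IsProb.sum_mul_abs_le_sqrt {p g : ι → ℝ} (hp : IsProb p) :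
    ∑ z, p z * |g z| ≤ √(∑ z, p z * g z ^ 2) := by
  refine Real.le_sqrt_of_sq_le ?_
  calc (∑ z, p z * |g z|) ^ 2 ≤ (∑ z, p z) * ∑ z, p z * g z ^ 2 :=
        sum_sq_le_sum_mul_sum_of_sq_le_mul _ (fun z _ => hp.1 z)
          (fun z _ => mul_nonneg (hp.1 z) (sq_nonneg _))
          (fun z _ => le_of_eq (by rw [mul_pow, sq_abs]; ring))
    _ = ∑ z, p z * g z ^ 2 := by rw [hp.2, one_mul]

lemma W1_bind_le {p p' : ι → ℝ} {k k' : ι → S → ℝ} (hk : ∀ x, IsProb (k x))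
    (hp' : ∀ x, 0 ≤ p' x) :
    W1 (fun y => ∑ x, p x * k x y) (fun y => ∑ x, p' x * k' x y)
      ≤ W1 p p' + ∑ x, p' x * W1 (k x) (k' x) := by
  calc W1 (fun y => ∑ x, p x * k x y) (fun y => ∑ x, p' x * k' x y)
      ≤ ∑ y, ∑ x, (|p x - p' x| * k x y + p' x * |k x y - k' x y|) := by
        refine sum_le_sum fun y _ => ?_
        rw [← sum_sub_distrib]
        refine (abs_sum_le_sum_abs _ _).trans (sum_le_sum fun x _ => ?_)
        rw [show p x * k x y - p' x * k' x y = (p x - p' x) * k x y + p' x * (k x y - k' x y)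
          by ring]
        refine (abs_add_le _ _).trans_eq ?_
        rw [abs_mul, abs_mul, abs_of_nonneg ((hk x).1 y), abs_of_nonneg (hp' x)]
    _ = W1 p p' + ∑ x, p' x * W1 (k x) (k' x) := by
        rw [sum_comm, W1, ← sum_add_distrib]
        refine sum_congr rfl fun x _ => ?_
        rw [sum_add_distrib, ← mul_sum, (hk x).2, mul_one, ← mul_sum, W1]

lemma abs_add_sum_sub_add_sum_le {a b ε : ℝ} {f g : ℕ → ℝ} {s : Finset ℕ}
    (hab : |a - b| ≤ ε) (hfg : ∀ r ∈ s, |f r - g r| ≤ ε) :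
    |(a + ∑ r ∈ s, f r) - (b + ∑ r ∈ s, g r)| ≤ (#s + 1) * ε := by
  rw [show (a + ∑ r ∈ s, f r) - (b + ∑ r ∈ s, g r) = (a - b) + ∑ r ∈ s, (f r - g r) by
    rw [sum_sub_distrib]; ring]
  calc _ ≤ |a - b| + ∑ r ∈ s, |f r - g r| := by
        grw [abs_add_le, abs_sum_le_sum_abs]
    _ ≤ ε + ∑ _r ∈ s, ε := add_le_add hab (sum_le_sum hfg)
    _ = (#s + 1) * ε := by rw [sum_const, nsmul_eq_mul]; ring

lemma abs_add_sum_le {a C : ℝ} {f : ℕ → ℝ} {s : Finset ℕ} (ha : |a| ≤ C)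
    (hf : ∀ r ∈ s, |f r| ≤ C) : |a + ∑ r ∈ s, f r| ≤ (#s + 1) * C := by
  simpa using abs_add_sum_sub_add_sum_le (b := 0) (g := fun _ => 0) (by simpa using ha)
    (by simpa using hf)

lemma abs_sInf_sub_sInf_le {X Y : Set ℝ} {ε : ℝ} (hX : X.Nonempty) (hY : Y.Nonempty)
    (hXb : BddBelow X) (hYb : BddBelow Y)
    (hXY : ∀ x ∈ X, ∃ y ∈ Y, y ≤ x + ε) (hYX : ∀ y ∈ Y, ∃ x ∈ X, x ≤ y + ε) :
    |sInf X - sInf Y| ≤ ε := by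
  have key : ∀ {U V : Set ℝ}, U.Nonempty → BddBelow V → (∀ u ∈ U, ∃ v ∈ V, v ≤ u + ε) →
      sInf V - ε ≤ sInf U := fun hU hV h =>
    le_csInf hU fun u hu => by
      obtain ⟨v, hv, hvu⟩ := h u hu
      linarith [csInf_le hV hv]
  rw [abs_le]
  constructor <;> linarith [key hX hYb hXY, key hY hXb hYX]

lemma W1_self (μ : S → ℝ) : W1 μ μ = 0 := by simp [W1]

lemma W1_le_two {μ ν : S → ℝ} (hμ : IsProb μ) (hν : IsProb ν) : W1 μ ν ≤ 2 := by
  calc W1 μ ν ≤ ∑ x, (μ x + ν x) := sum_le_sum fun x _ =>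
        abs_le.2 ⟨by linarith [hμ.1 x, hν.1 x], by linarith [hμ.1 x, hν.1 x]⟩
    _ = 2 := by rw [sum_add_distrib, hμ.2, hν.2]; norm_num

lemma W1_add_one_div_sqrt_pos {N : ℕ} (hN : 0 < N) (μ ν : S → ℝ) : 0 < W1 μ ν + 1 / √N := by
  have : (0 : ℝ) < N := by exact_mod_cast hN
  exact add_pos_of_nonneg_of_pos (W1_nonneg μ ν) (by positivity)

lemma le_pow_mul_of_le_mul_add {a : ℕ → ℝ} {t : ℕ} {c D θ : ℝ} (hc : 0 ≤ c) (hD : 0 ≤ D)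
    (hθ : 0 ≤ θ) (ht : a t ≤ θ) (hstep : ∀ s, t ≤ s → a (s + 1) ≤ (1 + c) * a s + D * θ)
    {s : ℕ} (hs : t ≤ s) : a s ≤ (1 + c + D) ^ (s - t) * θ := by
  induction s, hs using Nat.le_induction with
  | base => simpa using ht
  | succ s hts ih =>
    have hpow : 1 ≤ (1 + c + D) ^ (s - t) := one_le_pow₀ (by linarith)
    calc a (s + 1) ≤ (1 + c) * a s + D * θ := hstep s hts
      _ ≤ (1 + c) * ((1 + c + D) ^ (s - t) * θ) + D * ((1 + c + D) ^ (s - t) * θ) :=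
          add_le_add (mul_le_mul_of_nonneg_left ih (by linarith))
            (mul_le_mul_of_nonneg_left (le_mul_of_one_le_left hθ hpow) hD)
      _ = (1 + c + D) ^ (s + 1 - t) * θ := by
          rw [show s + 1 - t = s - t + 1 by omega, pow_succ]; ring

end FiniteProbability

section ProductMeasure

variable {ι : Type*} [Fintype ι] [DecidableEq ι]

lemma sum_pi_mul_prod (p g : ι → S → ℝ) :
    ∑ z : ι → S, (∏ j, p j (z j)) * ∏ j, g j (z j) = ∏ j, ∑ y, p j y * g j y := by
  simp_rw [← prod_mul_distrib]
  exact (Fintype.prod_sum fun j y => p j y * g j y).symm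

lemma isProb_pi {p : ι → S → ℝ} (hp : ∀ j, IsProb (p j)) :
    IsProb (fun z : ι → S => ∏ j, p j (z j)) := by
  refine ⟨fun z => prod_nonneg fun j _ => (hp j).1 _, ?_⟩
  simpa [(hp _).2] using sum_pi_mul_prod p (fun _ _ => 1)

lemma sum_pi_mul_apply {p : ι → S → ℝ} (hp : ∀ j, IsProb (p j)) (i : ι) (f : S → ℝ) :
    ∑ z : ι → S, (∏ j, p j (z j)) * f (z i) = ∑ y, p i y * f y := by
  have h := sum_pi_mul_prod p (fun j y => if j = i then f y else 1)
  simp only [prod_ite_eq', mem_univ, if_true] at h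
  rw [h, prod_eq_single i (fun j _ hj => by simp [hj, (hp j).2]) (by simp)]
  simp

lemma sum_pi_mul_apply_mul_apply {p : ι → S → ℝ} (hp : ∀ j, IsProb (p j)) {i k : ι}
    (hik : i ≠ k) (f g : S → ℝ) :
    ∑ z : ι → S, (∏ j, p j (z j)) * (f (z i) * g (z k))
      = (∑ y, p i y * f y) * ∑ y, p k y * g y := by
  have h := sum_pi_mul_prod p
    (fun j y => (if j = i then f y else 1) * (if j = k then g y else 1))
  simp only [prod_mul_distrib, prod_ite_eq', mem_univ, if_true] at h
  rw [h]
  have hj : ∀ j, ∑ y, p j y * ((if j = i then f y else 1) * (if j = k then g y else 1))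
      = (if j = i then ∑ y, p i y * f y else 1) * (if j = k then ∑ y, p k y * g y else 1) := by
    intro j
    by_cases hji : j = i
    · subst hji; simp [hik]
    · by_cases hjk : j = k
      · subst hjk; simp [hji]
      · simp [hji, hjk, (hp j).2]
  simp only [hj, prod_mul_distrib, prod_ite_eq', mem_univ, if_true]

variable [DecidableEq S]

/-- Variance of a sum of independent centred Bernoulli variables: cross terms vanish and each
diagonal term is `p (1 - p) ≤ 1/4`. -/
lemma sum_pi_mul_sq_sum_indicator_sub_le {p : ι → S → ℝ} (hp : ∀ j, IsProb (p j)) (x : S) :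
    ∑ z : ι → S, (∏ j, p j (z j)) * (∑ j, ((if z j = x then 1 else 0) - p j x)) ^ 2
      ≤ Fintype.card ι / 4 := by
  set Y : ι → S → ℝ := fun j y => (if y = x then 1 else 0) - p j x
  have hmean : ∀ j, ∑ y, p j y * Y j y = 0 := fun j => by
    simp [Y, mul_sub, sum_sub_distrib, ← sum_mul, (hp j).2]
  have hcross : ∀ j k, j ≠ k → ∑ z : ι → S, (∏ m, p m (z m)) * (Y j (z j) * Y k (z k)) = 0 :=
    fun j k hjk => by rw [sum_pi_mul_apply_mul_apply hp hjk, hmean, zero_mul]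
  have hdiag : ∀ j, ∑ z : ι → S, (∏ m, p m (z m)) * (Y j (z j) * Y j (z j)) ≤ 1 / 4 := by
    intro j
    rw [sum_pi_mul_apply hp j (fun y => Y j y * Y j y)]
    have hvar : ∑ y, p j y * (Y j y * Y j y) = p j x * (1 - p j x) := by
      have h : ∀ y, p j y * (Y j y * Y j y)
          = p j y * (if y = x then 1 else 0) * (1 - 2 * p j x) + p j y * p j x ^ 2 := by
        intro y
        by_cases hy : y = x <;> simp only [Y, hy, if_true, if_false] <;> ring
      simp only [h, sum_add_distrib, ← sum_mul, mul_ite, mul_one, mul_zero, sum_ite_eq',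
        mem_univ, if_true, (hp j).2]
      ring
    rw [hvar]
    nlinarith [sq_nonneg (p j x - 1 / 2)]
  calc ∑ z : ι → S, (∏ j, p j (z j)) * (∑ j, Y j (z j)) ^ 2
      = ∑ j, ∑ k, ∑ z : ι → S, (∏ m, p m (z m)) * (Y j (z j) * Y k (z k)) := by
        simp_rw [sq, sum_mul_sum, mul_sum]
        rw [sum_comm]
        exact sum_congr rfl fun j _ => sum_comm
    _ ≤ ∑ _j : ι, (1 : ℝ) / 4 := by
        refine sum_le_sum fun j _ => ?_
        rw [sum_eq_single j (fun k _ hk => hcross j k (Ne.symm hk)) (by simp)]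
        exact hdiag j
    _ = Fintype.card ι / 4 := by rw [sum_const, card_univ, nsmul_eq_mul]; ring

noncomputable def marginal (P : (ι → S) → ℝ) (i : ι) (x : S) : ℝ :=
  ∑ w, P w * if w i = x then 1 else 0

lemma sum_mul_apply_eq_sum_marginal_mul (P : (ι → S) → ℝ) (i : ι) (f : S → ℝ) :
    ∑ w, P w * f (w i) = ∑ x, marginal P i x * f x := by
  simp_rw [marginal, sum_mul, mul_assoc, ite_mul, one_mul, zero_mul]
  rw [sum_comm]
  simp

end ProductMeasure

section Empirical

variable [DecidableEq S]

lemma sum_emp_mul {N : ℕ} (w : Fin N → S) (k : S → ℝ) :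
    ∑ x, emp w x * k x = (∑ j, k (w j)) / N := by
  simp_rw [emp, div_mul_eq_mul_div, ← sum_div, sum_mul, ite_mul, one_mul, zero_mul]
  rw [sum_comm]
  simp

lemma isProb_emp {N : ℕ} (hN : 0 < N) (w : Fin N → S) : IsProb (emp w) := by
  refine ⟨fun x => div_nonneg (sum_nonneg fun _ _ => by positivity) (Nat.cast_nonneg N), ?_⟩
  have h := sum_emp_mul w (fun _ => 1)
  simp only [mul_one, sum_const, card_univ, Fintype.card_fin, nsmul_eq_mul] at h
  rw [h, div_self (by exact_mod_cast hN.ne')]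

/-- Concentration of the empirical measure of `N` independent draws from `p 0, …, p (N-1)`,
from the variance bound in each state. -/
lemma sum_pi_mul_W1_emp_le {N : ℕ} (hN : 0 < N) {p : Fin N → S → ℝ} (hp : ∀ j, IsProb (p j)) :
    ∑ z : Fin N → S, (∏ j, p j (z j)) * W1 (emp z) (fun y => (∑ j, p j y) / N)
      ≤ Fintype.card S / (2 * √N) := by
  have hNpos : (0 : ℝ) < N := by exact_mod_cast hN
  have hW : ∀ z : Fin N → S, W1 (emp z) (fun y => (∑ j, p j y) / N)
      = ∑ x, |∑ j, ((if z j = x then 1 else 0) - p j x)| / N := fun z =>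
    sum_congr rfl fun x _ => by
      rw [emp, div_sub_div_same, sum_sub_distrib, abs_div, Nat.abs_cast]
  calc ∑ z : Fin N → S, (∏ j, p j (z j)) * W1 (emp z) (fun y => (∑ j, p j y) / N)
      = ∑ x, (∑ z : Fin N → S, (∏ j, p j (z j)) *
          |∑ j, ((if z j = x then 1 else 0) - p j x)|) / N := by
        simp_rw [hW, mul_sum, sum_div]
        rw [sum_comm]
        exact sum_congr rfl fun x _ => sum_congr rfl fun z _ => by ring
    _ ≤ ∑ _x : S, √((N : ℝ) / 4) / N := by
        refine sum_le_sum fun x _ => div_le_div_of_nonneg_right ?_ hNpos.le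
        refine ((isProb_pi hp).sum_mul_abs_le_sqrt).trans (Real.sqrt_le_sqrt ?_)
        simpa using sum_pi_mul_sq_sum_indicator_sub_le hp x
    _ = Fintype.card S / (2 * √N) := by
        have hsq : √(N : ℝ) ^ 2 = N := Real.sq_sqrt hNpos.le
        have hs : 0 < √(N : ℝ) := Real.sqrt_pos.2 hNpos
        rw [sum_const, card_univ, nsmul_eq_mul, Real.sqrt_div' _ (by norm_num : (0:ℝ) ≤ 4),
          show √(4 : ℝ) = 2 by rw [show (4 : ℝ) = 2 ^ 2 by norm_num, Real.sqrt_sq (by norm_num)]]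
        field_simp
        rw [hsq]

end Empirical

section Dynamics

variable {q : ℕ → S → (S → ℝ) → A → S → ℝ}

def IsTransitionKernel (q : ℕ → S → (S → ℝ) → A → S → ℝ) : Prop :=
  ∀ s x μ a, IsProb μ → IsProb (q s x μ a)

lemma flowM_of_le (α : ℕ → S → (S → ℝ) → A) (t : ℕ) (μ : S → ℝ) {s : ℕ} (hs : s ≤ t) :
    flowM q α t μ s = μ := by
  cases s with
  | zero => rfl
  | succ n => rw [flowM, if_pos hs]

lemma flowM_succ (α : ℕ → S → (S → ℝ) → A) (t : ℕ) (μ : S → ℝ) {s : ℕ} (hs : t ≤ s) :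
    flowM q α t μ (s + 1) = fun y => ∑ x, flowM q α t μ s x *
      q s x (flowM q α t μ s) (α s x (flowM q α t μ s)) y := by
  rw [flowM, if_neg (by omega)]

lemma isProb_flowM (hq : IsTransitionKernel q) (α : ℕ → S → (S → ℝ) → A) (t : ℕ) {μ : S → ℝ}
    (hμ : IsProb μ) (s : ℕ) : IsProb (flowM q α t μ s) := by
  induction s with
  | zero => exact hμ
  | succ n ih =>
    rcases le_or_gt (n + 1) t with h | h
    · rwa [flowM_of_le α t μ h]
    · rw [flowM_succ α t μ (by omega)]
      exact ih.bind fun x => hq _ _ _ _ ih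

variable [DecidableEq S]

lemma chainM_of_le (ν : ℕ → S → ℝ) (αt : ℕ → S → (S → ℝ) → A) (t : ℕ) (x₀ : S) {s : ℕ}
    (hs : s ≤ t) : chainM q ν αt t x₀ s = fun x => if x = x₀ then 1 else 0 := by
  cases s with
  | zero => rfl
  | succ n => rw [chainM, if_pos hs]

lemma chainM_succ (ν : ℕ → S → ℝ) (αt : ℕ → S → (S → ℝ) → A) (t : ℕ) (x₀ : S) {s : ℕ}
    (hs : t ≤ s) : chainM q ν αt t x₀ (s + 1)
      = fun y => ∑ x, chainM q ν αt t x₀ s x * q s x (ν s) (αt s x (ν s)) y := by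
  rw [chainM, if_neg (by omega)]

lemma isProb_chainM (hq : IsTransitionKernel q) {ν : ℕ → S → ℝ} (hν : ∀ s, IsProb (ν s))
    (αt : ℕ → S → (S → ℝ) → A) (t : ℕ) (x₀ : S) (s : ℕ) : IsProb (chainM q ν αt t x₀ s) := by
  induction s with
  | zero => exact isProb_indicator x₀
  | succ n ih =>
    rcases le_or_gt (n + 1) t with h | h
    · rw [chainM_of_le ν αt t x₀ h]; exact isProb_indicator x₀
    · rw [chainM_succ ν αt t x₀ (by omega)]
      exact ih.bind fun x => hq _ _ _ _ (hν n)

lemma chainM_congr_ctrl {ν : ℕ → S → ℝ} {αt αt' : ℕ → S → (S → ℝ) → A}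
    (h : ∀ s x, αt s x (ν s) = αt' s x (ν s)) (t : ℕ) (x₀ : S) :
    chainM q ν αt t x₀ = chainM q ν αt' t x₀ := by
  funext s
  induction s with
  | zero => rfl
  | succ n ih =>
    rcases le_or_gt (n + 1) t with hn | hn
    · rw [chainM_of_le ν αt t x₀ hn, chainM_of_le ν αt' t x₀ hn]
    · rw [chainM_succ ν αt t x₀ (by omega), chainM_succ ν αt' t x₀ (by omega), ih]
      simp only [h]

lemma costM_congr_ctrl {F : ℕ → S → (S → ℝ) → A → ℝ} {G : S → (S → ℝ) → ℝ} {T : ℕ}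
    {ν : ℕ → S → ℝ} {αt αt' : ℕ → S → (S → ℝ) → A} (h : ∀ s x, αt s x (ν s) = αt' s x (ν s))
    (t : ℕ) (x₀ : S) : costM q F G T ν t x₀ αt = costM q F G T ν t x₀ αt' := by
  simp only [costM, chainM_congr_ctrl h, h]

noncomputable def jointKernel (q : ℕ → S → (S → ℝ) → A → S → ℝ) {N : ℕ}
    (αv : Fin N → ℕ → S → (S → ℝ) → A) (s : ℕ) (w z : Fin N → S) : ℝ :=
  ∏ j, q s (w j) (emp w) (αv j s (w j) (emp w)) (z j)

variable {N : ℕ} {αv : Fin N → ℕ → S → (S → ℝ) → A}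

lemma isProb_jointKernel (hq : IsTransitionKernel q) (hN : 0 < N) (s : ℕ) (w : Fin N → S) :
    IsProb (jointKernel q αv s w) :=
  isProb_pi fun _ => hq _ _ _ _ (isProb_emp hN w)

lemma jointFlow_of_le (t : ℕ) (xv : Fin N → S) {s : ℕ} (hs : s ≤ t) :
    jointFlow q αv t xv s = fun z => if z = xv then 1 else 0 := by
  cases s with
  | zero => rfl
  | succ n => rw [jointFlow, if_pos hs]

lemma jointFlow_succ (t : ℕ) (xv : Fin N → S) {s : ℕ} (hs : t ≤ s) :
    jointFlow q αv t xv (s + 1)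
      = fun z => ∑ w, jointFlow q αv t xv s w * jointKernel q αv s w z := by
  rw [jointFlow, if_neg (by omega)]
  rfl

lemma isProb_jointFlow (hq : IsTransitionKernel q) (hN : 0 < N) (t : ℕ) (xv : Fin N → S) (s : ℕ) :
    IsProb (jointFlow q αv t xv s) := by
  induction s with
  | zero => exact isProb_indicator xv
  | succ n ih =>
    rcases le_or_gt (n + 1) t with h | h
    · rw [jointFlow_of_le t xv h]; exact isProb_indicator xv
    · rw [jointFlow_succ t xv (by omega)]
      exact ih.bind (isProb_jointKernel hq hN n)

lemma sum_jointFlow_succ_mul (t : ℕ) (xv : Fin N → S) {s : ℕ} (hs : t ≤ s)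
    (f : (Fin N → S) → ℝ) :
    ∑ z, jointFlow q αv t xv (s + 1) z * f z
      = ∑ w, jointFlow q αv t xv s w * ∑ z, jointKernel q αv s w z * f z := by
  simp_rw [jointFlow_succ t xv hs, sum_mul, mul_sum, mul_assoc]
  exact sum_comm

lemma marginal_jointFlow_succ (hq : IsTransitionKernel q) (hN : 0 < N) (t : ℕ) (xv : Fin N → S)
    {s : ℕ} (hs : t ≤ s) (i : Fin N) :
    marginal (jointFlow q αv t xv (s + 1)) i
      = fun y => ∑ w, jointFlow q αv t xv s w * q s (w i) (emp w) (αv i s (w i) (emp w)) y := by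
  funext y
  rw [marginal, sum_jointFlow_succ_mul t xv hs]
  refine sum_congr rfl fun w _ => congrArg _ ?_
  simp only [jointKernel]
  rw [sum_pi_mul_apply (fun j => hq _ _ _ _ (isProb_emp hN w)) i
    (fun x => if x = y then 1 else 0)]
  simp

lemma marginal_jointFlow_of_le (t : ℕ) (xv : Fin N → S) (i : Fin N) {s : ℕ} (hs : s ≤ t) :
    marginal (jointFlow q αv t xv s) i = fun x => if x = xv i then 1 else 0 := by
  funext x
  simp only [marginal, jointFlow_of_le t xv hs, ite_mul, one_mul, zero_mul, sum_ite_eq',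
    mem_univ, if_true]
  exact if_congr eq_comm rfl rfl

end Dynamics

section Propagation

variable {q : ℕ → S → (S → ℝ) → A → S → ℝ}

lemma W1_average_le_of_eq_of_ne {N : ℕ} {r r' : Fin N → S → ℝ} (hr : ∀ j, IsProb (r j))
    (hr' : ∀ j, IsProb (r' j)) {i : Fin N} (h : ∀ j, j ≠ i → r j = r' j) :
    W1 (fun y => (∑ j, r j y) / N) (fun y => (∑ j, r' j y) / N) ≤ 2 / N := by
  have hdiff : ∀ y, (∑ j, r j y) / N - (∑ j, r' j y) / N = (r i y - r' i y) / N := fun y => by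
    rw [div_sub_div_same, ← sum_sub_distrib,
      sum_eq_single i (fun j _ hj => by rw [h j hj, sub_self]) (by simp)]
  simp_rw [W1, hdiff, abs_div, Nat.abs_cast, ← sum_div]
  exact div_le_div_of_nonneg_right (W1_le_two (hr i) (hr' i)) (Nat.cast_nonneg N)

def FeedbackLipschitz (q : ℕ → S → (S → ℝ) → A → S → ℝ) (α : ℕ → S → (S → ℝ) → A) (c : ℝ) :
    Prop :=
  ∀ s x μ ν, IsProb μ → IsProb ν → W1 (q s x μ (α s x μ)) (q s x ν (α s x ν)) ≤ c * W1 μ ν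

noncomputable def feedbackLip (S : Type*) [Fintype S] (Lq L : ℝ) : ℝ :=
  Fintype.card S * max Lq 0 * (1 + L)

lemma feedbackLip_nonneg (S : Type*) [Fintype S] {L : ℝ} (hL : 0 ≤ L) (Lq : ℝ) :
    0 ≤ feedbackLip S Lq L := by
  unfold feedbackLip; positivity

lemma feedbackLipschitz_of_lipCtrl [PseudoMetricSpace A] {Lq L : ℝ}
    (hqLip : ∀ s x μ ν a b y, IsProb μ → IsProb ν →
      |q s x μ a y - q s x ν b y| ≤ Lq * (W1 μ ν + dist a b))
    {α : ℕ → S → (S → ℝ) → A} (hα : LipCtrl L α) :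
    FeedbackLipschitz q α (feedbackLip S Lq L) := by
  intro s x μ ν hμ hν
  have hW := W1_nonneg μ ν
  calc W1 (q s x μ (α s x μ)) (q s x ν (α s x ν)) ≤ ∑ _y : S, max Lq 0 * ((1 + L) * W1 μ ν) :=
        sum_le_sum fun y _ => (hqLip s x μ ν _ _ y hμ hν).trans <| by
          gcongr
          · exact le_max_left _ _
          · linarith [hα s x μ ν]
    _ = feedbackLip S Lq L * W1 μ ν := by
        rw [sum_const, card_univ, nsmul_eq_mul, feedbackLip]; ring

variable [DecidableEq S] {N : ℕ} {t : ℕ} {xv : Fin N → S}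

noncomputable def empError (q : ℕ → S → (S → ℝ) → A → S → ℝ)
    (αv : Fin N → ℕ → S → (S → ℝ) → A) (t : ℕ) (xv : Fin N → S) (ν : ℕ → S → ℝ) (s : ℕ) : ℝ :=
  ∑ w, jointFlow q αv t xv s w * W1 (emp w) (ν s)

/-- The three error terms: sampling noise (concentration), the deviating player `i` (`2 / N`),
and the Lipschitz feedback through the mean-field step. -/
lemma sum_jointKernel_mul_W1_emp_le (hq : IsTransitionKernel q) (hN : 0 < N) {c : ℝ}
    {α : ℕ → S → (S → ℝ) → A} (hc : FeedbackLipschitz q α c)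
    {αv : Fin N → ℕ → S → (S → ℝ) → A} {i : Fin N} (hαv : ∀ j, j ≠ i → αv j = α)
    (s : ℕ) (w : Fin N → S) {ν : S → ℝ} (hν : IsProb ν) :
    ∑ z, jointKernel q αv s w z * W1 (emp z) (fun y => ∑ x, ν x * q s x ν (α s x ν) y)
      ≤ Fintype.card S / (2 * √N) + 2 / N + (1 + c) * W1 (emp w) ν := by
  have hew := isProb_emp hN w
  set Q : Fin N → S → ℝ := fun j => q s (w j) (emp w) (αv j s (w j) (emp w))
  have hQ : ∀ j, IsProb (Q j) := fun j => hq _ _ _ _ hew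
  set mean : S → ℝ := fun y => (∑ j, Q j y) / N
  set mean' : S → ℝ := fun y => ∑ x, emp w x * q s x (emp w) (α s x (emp w)) y
  have hmean : W1 mean mean' ≤ 2 / N := by
    have h' : mean' = fun y => (∑ j, q s (w j) (emp w) (α s (w j) (emp w)) y) / N :=
      funext fun y => sum_emp_mul w _
    rw [h']
    exact W1_average_le_of_eq_of_ne (i := i) hQ (fun j => hq _ _ _ _ hew)
      (fun j hj => by simp only [Q, hαv j hj])
  have hflow : W1 mean' (fun y => ∑ x, ν x * q s x ν (α s x ν) y) ≤ (1 + c) * W1 (emp w) ν :=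
    calc _ ≤ W1 (emp w) ν + ∑ x, ν x * (c * W1 (emp w) ν) :=
          (W1_bind_le (fun x => hq _ _ _ _ hew) hν.1).trans <| add_le_add le_rfl
            (sum_le_sum fun x _ => mul_le_mul_of_nonneg_left (hc s x _ _ hew hν) (hν.1 x))
      _ = (1 + c) * W1 (emp w) ν := by rw [← sum_mul, hν.2]; ring
  calc ∑ z, jointKernel q αv s w z * W1 (emp z) (fun y => ∑ x, ν x * q s x ν (α s x ν) y)
      ≤ ∑ z, jointKernel q αv s w z * (W1 (emp z) mean
          + (W1 mean mean' + W1 mean' (fun y => ∑ x, ν x * q s x ν (α s x ν) y))) :=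
        sum_le_sum fun z _ => mul_le_mul_of_nonneg_left
          ((W1_triangle _ mean _).trans (add_le_add le_rfl (W1_triangle _ _ _)))
          ((isProb_jointKernel hq hN s w).1 z)
    _ = ∑ z, jointKernel q αv s w z * W1 (emp z) mean
          + (W1 mean mean' + W1 mean' (fun y => ∑ x, ν x * q s x ν (α s x ν) y)) := by
        simp_rw [mul_add, sum_add_distrib, ← sum_mul, (isProb_jointKernel hq hN s w).2, one_mul]
    _ ≤ Fintype.card S / (2 * √N) + (2 / N + (1 + c) * W1 (emp w) ν) :=
        add_le_add (sum_pi_mul_W1_emp_le hN hQ) (add_le_add hmean hflow)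
    _ = _ := by ring

lemma empError_succ_le (hq : IsTransitionKernel q) (hN : 0 < N) {c : ℝ} {α : ℕ → S → (S → ℝ) → A}
    (hc : FeedbackLipschitz q α c) {αv : Fin N → ℕ → S → (S → ℝ) → A} {i : Fin N}
    (hαv : ∀ j, j ≠ i → αv j = α) {μ : S → ℝ} (hμ : IsProb μ) {s : ℕ} (hs : t ≤ s) :
    empError q αv t xv (flowM q α t μ) (s + 1)
      ≤ (1 + c) * empError q αv t xv (flowM q α t μ) s + (Fintype.card S / 2 + 2) / √N := by
  have hNpos : (0 : ℝ) < N := by exact_mod_cast hN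
  have hsqrt : 0 < √(N : ℝ) := Real.sqrt_pos.2 hNpos
  have hP := isProb_jointFlow (αv := αv) hq hN t xv s
  set ν := flowM q α t μ
  have hνs : IsProb (ν s) := isProb_flowM hq α t hμ s
  have hnoise : Fintype.card S / (2 * √N) + 2 / N ≤ (Fintype.card S / 2 + 2) / √N := by
    rw [add_div, div_div, mul_comm]
    refine add_le_add le_rfl (div_le_div_of_nonneg_left zero_le_two hsqrt ?_)
    exact Real.sqrt_le_self_iff.2 (Or.inr (by exact_mod_cast hN))
  calc empError q αv t xv ν (s + 1)
      = ∑ w, jointFlow q αv t xv s w * ∑ z, jointKernel q αv s w z * W1 (emp z) (ν (s + 1)) :=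
        sum_jointFlow_succ_mul t xv hs _
    _ ≤ ∑ w, jointFlow q αv t xv s w * (Fintype.card S / (2 * √N) + 2 / N
          + (1 + c) * W1 (emp w) (ν s)) := by
        refine sum_le_sum fun w _ => mul_le_mul_of_nonneg_left ?_ (hP.1 w)
        rw [show ν (s + 1) = _ from flowM_succ α t μ hs]
        exact sum_jointKernel_mul_W1_emp_le hq hN hc hαv s w hνs
    _ = (1 + c) * empError q αv t xv ν s + (Fintype.card S / (2 * √N) + 2 / N) := by
        simp only [empError, mul_add, sum_add_distrib, ← sum_mul, hP.2, one_mul,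
          mul_left_comm _ (1 + c), ← mul_sum]
        ring
    _ ≤ _ := add_le_add le_rfl hnoise

noncomputable def empGrowth (S : Type*) [Fintype S] (c : ℝ) : ℝ :=
  1 + c + (Fintype.card S / 2 + 2)

lemma one_le_empGrowth (S : Type*) [Fintype S] {c : ℝ} (hc : 0 ≤ c) : 1 ≤ empGrowth S c := by
  unfold empGrowth; linarith [show (0 : ℝ) ≤ Fintype.card S / 2 by positivity]

lemma empError_le (hq : IsTransitionKernel q) (hN : 0 < N) {c : ℝ} (hc0 : 0 ≤ c)
    {α : ℕ → S → (S → ℝ) → A} (hc : FeedbackLipschitz q α c)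
    {αv : Fin N → ℕ → S → (S → ℝ) → A} {i : Fin N} (hαv : ∀ j, j ≠ i → αv j = α)
    {μ : S → ℝ} (hμ : IsProb μ) {θ : ℝ} (hθ : W1 (emp xv) μ + 1 / √N ≤ θ) {s T : ℕ}
    (hs : t ≤ s) (hsT : s ≤ T) :
    empError q αv t xv (flowM q α t μ) s ≤ empGrowth S c ^ T * θ := by
  have hW := W1_nonneg (emp xv) μ
  have hinv : 0 ≤ 1 / √(N : ℝ) := by positivity
  have hθ0 : 0 ≤ θ := by linarith
  have ht : empError q αv t xv (flowM q α t μ) t = W1 (emp xv) μ := by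
    simp [empError, jointFlow_of_le t xv le_rfl, flowM_of_le α t μ le_rfl]
  calc empError q αv t xv (flowM q α t μ) s ≤ empGrowth S c ^ (s - t) * θ := by
        refine le_pow_mul_of_le_mul_add hc0 (by positivity) hθ0 (by linarith) (fun r hr => ?_) hs
        refine (empError_succ_le hq hN hc hαv hμ hr).trans (add_le_add le_rfl ?_)
        rw [div_eq_mul_one_div]
        exact mul_le_mul_of_nonneg_left (by linarith) (by positivity)
    _ ≤ empGrowth S c ^ T * θ :=
        mul_le_mul_of_nonneg_right (pow_le_pow_right₀ (one_le_empGrowth S hc0) (by omega)) hθ0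

end Propagation

section LawOfDeviatingPlayer

variable [DecidableEq S] {q : ℕ → S → (S → ℝ) → A → S → ℝ} {N : ℕ} {t : ℕ} {xv : Fin N → S}

lemma W1_marginal_chainM_succ_le (hq : IsTransitionKernel q) (hN : 0 < N) {c : ℝ}
    {αt : ℕ → S → (S → ℝ) → A} (hc : FeedbackLipschitz q αt c)
    {αv : Fin N → ℕ → S → (S → ℝ) → A} {i : Fin N} (hαvi : αv i = αt)
    {ν : ℕ → S → ℝ} (hν : ∀ s, IsProb (ν s)) {s : ℕ} (hs : t ≤ s) :
    W1 (marginal (jointFlow q αv t xv (s + 1)) i) (chainM q ν αt t (xv i) (s + 1))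
      ≤ W1 (marginal (jointFlow q αv t xv s) i) (chainM q ν αt t (xv i) s)
        + c * empError q αv t xv ν s := by
  set P := jointFlow q αv t xv s
  have hP := isProb_jointFlow (αv := αv) hq hN t xv s
  set k : S → S → ℝ := fun x => q s x (ν s) (αt s x (ν s))
  have hk : ∀ x, IsProb (k x) := fun x => hq _ _ _ _ (hν s)
  have hmid : (fun y => ∑ w, P w * k (w i) y) = fun y => ∑ x, marginal P i x * k x y :=
    funext fun y => sum_mul_apply_eq_sum_marginal_mul P i (fun x => k x y)
  have hfeedback : W1 (fun y => ∑ w, P w * q s (w i) (emp w) (αt s (w i) (emp w)) y)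
      (fun y => ∑ w, P w * k (w i) y) ≤ c * empError q αv t xv ν s := by
    refine (W1_bind_le (fun w => hq _ _ _ _ (isProb_emp hN w)) hP.1).trans ?_
    rw [W1_self, zero_add, empError, mul_sum]
    exact sum_le_sum fun w _ => by
      rw [mul_left_comm]
      exact mul_le_mul_of_nonneg_left (hc _ _ _ _ (isProb_emp hN w) (hν s)) (hP.1 w)
  have hcontract : W1 (fun y => ∑ w, P w * k (w i) y) (chainM q ν αt t (xv i) (s + 1))
      ≤ W1 (marginal P i) (chainM q ν αt t (xv i) s) := by
    rw [hmid, chainM_succ ν αt t (xv i) hs]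
    refine (W1_bind_le hk (isProb_chainM hq hν αt t (xv i) s).1).trans_eq ?_
    simp [k, W1_self]
  rw [marginal_jointFlow_succ hq hN t xv hs, hαvi]
  linarith [W1_triangle (fun y => ∑ w, P w * q s (w i) (emp w) (αt s (w i) (emp w)) y)
    (fun y => ∑ w, P w * k (w i) y) (chainM q ν αt t (xv i) (s + 1))]

lemma W1_marginal_chainM_le (hq : IsTransitionKernel q) (hN : 0 < N) {c : ℝ} (hc0 : 0 ≤ c)
    {α αt : ℕ → S → (S → ℝ) → A} (hc : FeedbackLipschitz q α c)
    (hct : FeedbackLipschitz q αt c) {αv : Fin N → ℕ → S → (S → ℝ) → A} {i : Fin N}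
    (hαv : ∀ j, j ≠ i → αv j = α) (hαvi : αv i = αt) {μ : S → ℝ} (hμ : IsProb μ) {θ : ℝ}
    (hθ : W1 (emp xv) μ + 1 / √N ≤ θ) {s T : ℕ} (hs : t ≤ s) (hsT : s ≤ T) :
    W1 (marginal (jointFlow q αv t xv s) i) (chainM q (flowM q α t μ) αt t (xv i) s)
      ≤ T * (c * (empGrowth S c ^ T * θ)) := by
  have hθ0 : 0 ≤ θ := (W1_add_one_div_sqrt_pos hN _ _).le.trans hθ
  set K := c * (empGrowth S c ^ T * θ)
  have hK : 0 ≤ K :=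
    mul_nonneg hc0 (mul_nonneg (pow_nonneg (zero_le_one.trans (one_le_empGrowth S hc0)) T) hθ0)
  have key : ∀ r, t ≤ r → r ≤ T →
      W1 (marginal (jointFlow q αv t xv r) i) (chainM q (flowM q α t μ) αt t (xv i) r)
        ≤ (r - t : ℕ) * K := by
    intro r hr
    induction r, hr using Nat.le_induction with
    | base =>
      intro _
      simp [marginal_jointFlow_of_le t xv i le_rfl, chainM_of_le _ αt t (xv i) le_rfl, W1_self]
    | succ r htr ih =>
      intro hrT
      calc _ ≤ (r - t : ℕ) * K + c * empError q αv t xv (flowM q α t μ) r :=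
            (W1_marginal_chainM_succ_le hq hN hct hαvi (isProb_flowM hq α t hμ) htr).trans
              (add_le_add (ih (by omega)) le_rfl)
        _ ≤ (r - t : ℕ) * K + K := add_le_add le_rfl
            (mul_le_mul_of_nonneg_left (empError_le hq hN hc0 hc hαv hμ hθ htr (by omega)) hc0)
        _ = (r + 1 - t : ℕ) * K := by
            rw [show r + 1 - t = r - t + 1 by omega]; push_cast; ring
  refine (key s hs hsT).trans (mul_le_mul_of_nonneg_right ?_ hK)
  exact_mod_cast (Nat.sub_le s t).trans hsT

end LawOfDeviatingPlayer

section Modulus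

open Filter Topology

noncomputable def costModulus (S : Type*) [Fintype S] (T : ℕ) (Lq C L : ℝ) (ρ : ℝ → ℝ)
    (θ : ℝ) : ℝ :=
  ρ ((1 + L) * √θ) + 2 * C * empGrowth S (feedbackLip S Lq L) ^ T * √θ
    + C * T * feedbackLip S Lq L * empGrowth S (feedbackLip S Lq L) ^ T * θ

lemma monotone_costModulus (S : Type*) [Fintype S] (T : ℕ) (Lq : ℝ) {C L : ℝ} {ρ : ℝ → ℝ}
    (hρ : Monotone ρ) (hC : 0 ≤ C) (hL : 0 ≤ L) : Monotone (costModulus S T Lq C L ρ) := by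
  have hc := feedbackLip_nonneg S hL Lq
  have hK : 0 ≤ empGrowth S (feedbackLip S Lq L) ^ T :=
    pow_nonneg (zero_le_one.trans (one_le_empGrowth S hc)) T
  intro a b hab
  have hsq := Real.sqrt_le_sqrt hab
  unfold costModulus
  gcongr
  exact hρ (by gcongr)

lemma tendsto_costModulus (S : Type*) [Fintype S] (T : ℕ) (Lq C : ℝ) {L : ℝ} {ρ : ℝ → ℝ}
    (hρ : Tendsto ρ (𝓝[>] 0) (𝓝 0)) (hL : 0 ≤ L) :
    Tendsto (costModulus S T Lq C L ρ) (𝓝[>] 0) (𝓝 0) := by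
  have hsqrt : Tendsto (fun θ : ℝ => √θ) (𝓝[>] 0) (𝓝 0) := by
    simpa using Real.continuous_sqrt.tendsto 0 |>.mono_left nhdsWithin_le_nhds
  have hid : Tendsto (fun θ : ℝ => θ) (𝓝[>] 0) (𝓝 0) := tendsto_nhdsWithin_of_tendsto_nhds
    tendsto_id
  have hinner : Tendsto (fun θ : ℝ => (1 + L) * √θ) (𝓝[>] 0) (𝓝[>] 0) := by
    refine tendsto_nhdsWithin_iff.2 ⟨by simpa using hsqrt.const_mul (1 + L), ?_⟩
    filter_upwards [self_mem_nhdsWithin] with θ hθ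
    exact mul_pos (by linarith) (Real.sqrt_pos.2 hθ)
  have h := ((hρ.comp hinner).add
    (hsqrt.const_mul (2 * C * empGrowth S (feedbackLip S Lq L) ^ T))).add
    (hid.const_mul (C * T * feedbackLip S Lq L * empGrowth S (feedbackLip S Lq L) ^ T))
  rw [mul_zero, mul_zero, add_zero, add_zero] at h
  exact h

end Modulus

section CostComparison

variable [DecidableEq S]

lemma le_modulus_add_of_le {ρ : ℝ → ℝ} (hρ : Monotone ρ) {a δ C u d : ℝ} (ha : 0 ≤ a)
    (hδ : 0 < δ) (hρδ : 0 ≤ ρ (a * δ)) (hC : 0 ≤ C) (hu : 0 ≤ u) (hdρ : d ≤ ρ (a * u))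
    (hdC : d ≤ 2 * C) : d ≤ ρ (a * δ) + 2 * C / δ * u := by
  rcases le_or_gt u δ with huδ | huδ
  · have : 0 ≤ 2 * C / δ * u := by positivity
    linarith [hρ (mul_le_mul_of_nonneg_left huδ ha)]
  · have : 2 * C ≤ 2 * C / δ * u := by
      rw [div_mul_eq_mul_div, le_div_iff₀ hδ]
      exact mul_le_mul_of_nonneg_left huδ.le (by positivity)
    linarith

lemma abs_sum_mul_emp_sub_sum_mul_le {N : ℕ} {P : (Fin N → S) → ℝ} (hP : IsProb P)
    (i : Fin N) (p ν : S → ℝ) {φ : S → (S → ℝ) → ℝ} {ε K C : ℝ}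
    (hφ : ∀ w : Fin N → S, |φ (w i) (emp w) - φ (w i) ν| ≤ ε + K * W1 (emp w) ν)
    (hC : ∀ x, |φ x ν| ≤ C) :
    |∑ w, P w * φ (w i) (emp w) - ∑ x, p x * φ x ν|
      ≤ ε + K * ∑ w, P w * W1 (emp w) ν + C * W1 (marginal P i) p := by
  have hA : |∑ w, P w * φ (w i) (emp w) - ∑ w, P w * φ (w i) ν|
      ≤ ε + K * ∑ w, P w * W1 (emp w) ν := by
    rw [← sum_sub_distrib]
    calc _ ≤ ∑ w, P w * (ε + K * W1 (emp w) ν) := by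
          refine (abs_sum_le_sum_abs _ _).trans (sum_le_sum fun w _ => ?_)
          rw [← mul_sub, abs_mul, abs_of_nonneg (hP.1 w)]
          exact mul_le_mul_of_nonneg_left (hφ w) (hP.1 w)
      _ = _ := by
          simp only [mul_add, sum_add_distrib, ← sum_mul, hP.2, one_mul, mul_left_comm _ K,
            ← mul_sum]
  have hB : |∑ w, P w * φ (w i) ν - ∑ x, p x * φ x ν| ≤ C * W1 (marginal P i) p := by
    rw [sum_mul_apply_eq_sum_marginal_mul P i (fun x => φ x ν), ← sum_sub_distrib, W1, mul_sum]
    refine (abs_sum_le_sum_abs _ _).trans (sum_le_sum fun x _ => ?_)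
    rw [← sub_mul, abs_mul, mul_comm]
    exact mul_le_mul_of_nonneg_right (hC x) (abs_nonneg _)
  linarith [abs_sub_le (∑ w, P w * φ (w i) (emp w)) (∑ w, P w * φ (w i) ν) (∑ x, p x * φ x ν)]

variable [PseudoMetricSpace A] {q : ℕ → S → (S → ℝ) → A → S → ℝ} {T : ℕ} {Lq C L : ℝ}
  {ρ : ℝ → ℝ}

/-- The modulus is split at the scale `√θ`: the empirical measure is farther than `√θ` from
the flow with probability at most `E W1 / √θ ≲ √θ` (Markov), where only the bound `2 C` is used. -/
lemma abs_sum_jointFlow_mul_sub_sum_chainM_mul_le (hρ : Monotone ρ) (hq : IsTransitionKernel q)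
    (hqLip : ∀ s x μ ν a b y, IsProb μ → IsProb ν →
      |q s x μ a y - q s x ν b y| ≤ Lq * (W1 μ ν + dist a b))
    (hC : 0 ≤ C) (hL : 0 ≤ L) {N : ℕ} (hN : 0 < N) {t : ℕ} (xv : Fin N → S) {μ : S → ℝ}
    (hμ : IsProb μ) {α αt : ℕ → S → (S → ℝ) → A} (hα : LipCtrl L α) (hαt : LipCtrl L αt)
    (i : Fin N) {θ : ℝ} (hθ : W1 (emp xv) μ + 1 / √N ≤ θ) {s : ℕ} (hts : t ≤ s) (hsT : s ≤ T)
    {φ : S → (S → ℝ) → ℝ}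
    (hφc : ∀ x μ', IsProb μ' →
      |φ x μ' - φ x (flowM q α t μ s)| ≤ ρ ((1 + L) * W1 μ' (flowM q α t μ s)))
    (hφb : ∀ x μ', IsProb μ' → |φ x μ'| ≤ C) :
    |∑ w, jointFlow q (replaceI α αt i) t xv s w * φ (w i) (emp w)
        - ∑ x, chainM q (flowM q α t μ) αt t (xv i) s x * φ x (flowM q α t μ s)|
      ≤ costModulus S T Lq C L ρ θ := by
  set c := feedbackLip S Lq L
  have hc0 : 0 ≤ c := feedbackLip_nonneg S hL Lq
  have hνs : IsProb (flowM q α t μ s) := isProb_flowM hq α t hμ s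
  have hαv : ∀ j, j ≠ i → replaceI α αt i j = α := fun j hj => if_neg hj
  have hθpos : 0 < θ := (W1_add_one_div_sqrt_pos hN _ _).trans_le hθ
  have hδ : 0 < √θ := Real.sqrt_pos.2 hθpos
  have hρδ : 0 ≤ ρ ((1 + L) * √θ) := by
    have h0 := hφc (xv i) _ hνs
    rw [sub_self, abs_zero, W1_self, mul_zero] at h0
    exact h0.trans (hρ (by positivity))
  have hm := empError_le hq hN hc0 (feedbackLipschitz_of_lipCtrl hqLip hα) hαv hμ hθ hts hsT
  have he := W1_marginal_chainM_le hq hN hc0 (feedbackLipschitz_of_lipCtrl hqLip hα)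
    (feedbackLipschitz_of_lipCtrl hqLip hαt) hαv (if_pos rfl) hμ hθ hts hsT
  refine (abs_sum_mul_emp_sub_sum_mul_le (isProb_jointFlow hq hN t xv s) i _ _
    (fun w => le_modulus_add_of_le hρ (by linarith) hδ hρδ hC (W1_nonneg _ _)
      (hφc _ _ (isProb_emp hN w)) ((abs_sub _ _).trans
        (by linarith [hφb (w i) _ (isProb_emp hN w), hφb (w i) _ hνs])))
    (fun x => hφb x _ hνs)).trans ?_
  calc _ ≤ ρ ((1 + L) * √θ) + 2 * C / √θ * (empGrowth S c ^ T * θ)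
        + C * (T * (c * (empGrowth S c ^ T * θ))) := by
        gcongr
        exact hm
    _ = costModulus S T Lq C L ρ θ := by
        rw [costModulus, show 2 * C / √θ * (empGrowth S c ^ T * θ)
          = 2 * C * empGrowth S c ^ T * (θ / √θ) by ring, Real.div_sqrt]
        ring

variable {F : ℕ → S → (S → ℝ) → A → ℝ} {G : S → (S → ℝ) → ℝ}

theorem abs_Ji_sub_costM_le (hρ : Monotone ρ) (hq : IsTransitionKernel q)
    (hqLip : ∀ s x μ ν a b y, IsProb μ → IsProb ν →
      |q s x μ a y - q s x ν b y| ≤ Lq * (W1 μ ν + dist a b))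
    (hFb : ∀ s x μ a, IsProb μ → |F s x μ a| ≤ C) (hGb : ∀ x μ, IsProb μ → |G x μ| ≤ C)
    (hFc : ∀ s x μ ν a b, IsProb μ → IsProb ν →
      |F s x μ a - F s x ν b| ≤ ρ (W1 μ ν + dist a b))
    (hGc : ∀ x μ ν, IsProb μ → IsProb ν → |G x μ - G x ν| ≤ ρ (W1 μ ν))
    (hC : 0 ≤ C) (hL : 0 ≤ L) {N : ℕ} (hN : 0 < N) {t : ℕ} (htT : t ≤ T) (xv : Fin N → S)
    {μ : S → ℝ} (hμ : IsProb μ) {α αt : ℕ → S → (S → ℝ) → A} (hα : LipCtrl L α)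
    (hαt : LipCtrl L αt) (i : Fin N) {θ : ℝ} (hθ : W1 (emp xv) μ + 1 / √N ≤ θ) :
    |Ji q F G T t xv (replaceI α αt i) i - costM q F G T (flowM q α t μ) t (xv i) αt|
      ≤ (T + 1) * costModulus S T Lq C L ρ θ := by
  have hν : ∀ s, IsProb (flowM q α t μ s) := isProb_flowM hq α t hμ
  have hFstep : ∀ s ∈ Ico t T,
      |∑ w, jointFlow q (replaceI α αt i) t xv s w
          * F s (w i) (emp w) (replaceI α αt i i s (w i) (emp w))
        - ∑ x, chainM q (flowM q α t μ) αt t (xv i) s x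
          * F s x (flowM q α t μ s) (αt s x (flowM q α t μ s))|
        ≤ costModulus S T Lq C L ρ θ := by
    intro s hs
    rw [mem_Ico] at hs
    simp only [replaceI, if_true]
    exact abs_sum_jointFlow_mul_sub_sum_chainM_mul_le hρ hq hqLip hC hL hN xv hμ hα hαt i hθ
      hs.1 hs.2.le (φ := fun x m => F s x m (αt s x m))
      (fun x μ' hμ' => (hFc _ _ _ _ _ _ hμ' (hν s)).trans
        (hρ (by nlinarith [hαt s x μ' (flowM q α t μ s), W1_nonneg μ' (flowM q α t μ s)])))
      (fun x μ' hμ' => hFb _ _ _ _ hμ')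
  have hGstep := abs_sum_jointFlow_mul_sub_sum_chainM_mul_le hρ hq hqLip hC hL hN xv hμ hα hαt
    i hθ htT le_rfl (φ := G)
    (fun x μ' hμ' => (hGc _ _ _ hμ' (hν T)).trans
      (hρ (by nlinarith [W1_nonneg μ' (flowM q α t μ T)])))
    (fun x μ' hμ' => hGb _ _ hμ')
  refine (abs_add_sum_sub_add_sum_le hGstep hFstep).trans
    (mul_le_mul_of_nonneg_right ?_ ((abs_nonneg _).trans hGstep))
  rw [Nat.card_Ico]
  gcongr
  exact_mod_cast Nat.sub_le T t

end CostComparison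

section ValueComparison

variable [DecidableEq S] {q : ℕ → S → (S → ℝ) → A → S → ℝ} {F : ℕ → S → (S → ℝ) → A → ℝ}
  {G : S → (S → ℝ) → ℝ} {T : ℕ} {C : ℝ}

lemma abs_costM_le (hq : IsTransitionKernel q) (hFb : ∀ s x μ a, IsProb μ → |F s x μ a| ≤ C)
    (hGb : ∀ x μ, IsProb μ → |G x μ| ≤ C) {ν : ℕ → S → ℝ} (hν : ∀ s, IsProb (ν s)) (t : ℕ)
    (x₀ : S) (αt : ℕ → S → (S → ℝ) → A) :
    |costM q F G T ν t x₀ αt| ≤ (#(Ico t T) + 1) * C :=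
  abs_add_sum_le ((isProb_chainM hq hν αt t x₀ T).abs_sum_mul_le fun _ => hGb _ _ (hν T))
    fun s _ => (isProb_chainM hq hν αt t x₀ s).abs_sum_mul_le fun _ => hFb _ _ _ _ (hν s)

lemma abs_Ji_le (hq : IsTransitionKernel q) (hFb : ∀ s x μ a, IsProb μ → |F s x μ a| ≤ C)
    (hGb : ∀ x μ, IsProb μ → |G x μ| ≤ C) {N : ℕ} (hN : 0 < N) (t : ℕ) (xv : Fin N → S)
    (αv : Fin N → ℕ → S → (S → ℝ) → A) (i : Fin N) :
    |Ji q F G T t xv αv i| ≤ (#(Ico t T) + 1) * C :=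
  abs_add_sum_le ((isProb_jointFlow hq hN t xv T).abs_sum_mul_le
      fun w => hGb _ _ (isProb_emp hN w))
    fun s _ => (isProb_jointFlow hq hN t xv s).abs_sum_mul_le
      fun w => hFb _ _ _ _ (isProb_emp hN w)

variable [PseudoMetricSpace A] {Lq L : ℝ} {ρ : ℝ → ℝ}

theorem abs_vNi_sub_valueM_le (hρ : Monotone ρ) (hq : IsTransitionKernel q)
    (hqLip : ∀ s x μ ν a b y, IsProb μ → IsProb ν →
      |q s x μ a y - q s x ν b y| ≤ Lq * (W1 μ ν + dist a b))
    (hFb : ∀ s x μ a, IsProb μ → |F s x μ a| ≤ C) (hGb : ∀ x μ, IsProb μ → |G x μ| ≤ C)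
    (hFc : ∀ s x μ ν a b, IsProb μ → IsProb ν →
      |F s x μ a - F s x ν b| ≤ ρ (W1 μ ν + dist a b))
    (hGc : ∀ x μ ν, IsProb μ → IsProb ν → |G x μ - G x ν| ≤ ρ (W1 μ ν))
    (hC : 0 ≤ C) (hL : 0 ≤ L) {N : ℕ} (hN : 0 < N) {t : ℕ} (htT : t ≤ T) (xv : Fin N → S)
    {μ : S → ℝ} (hμ : IsProb μ) {α : ℕ → S → (S → ℝ) → A} (hα : LipCtrl L α) (i : Fin N)
    {θ : ℝ} (hθ : W1 (emp xv) μ + 1 / √N ≤ θ) :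
    |vNi q F G T L t xv α i - valueM q F G T (flowM q α t μ) t (xv i)|
      ≤ (T + 1) * costModulus S T Lq C L ρ θ := by
  set ν := flowM q α t μ
  have hν : ∀ s, IsProb (ν s) := isProb_flowM hq α t hμ
  have hJ : ∀ {αt}, LipCtrl L αt →
      |Ji q F G T t xv (replaceI α αt i) i - costM q F G T ν t (xv i) αt|
        ≤ (T + 1) * costModulus S T Lq C L ρ θ := fun hαt =>
    abs_Ji_sub_costM_le hρ hq hqLip hFb hGb hFc hGc hC hL hN htT xv hμ hα hαt i hθ
  refine abs_sInf_sub_sInf_le ⟨_, α, hα, rfl⟩ ⟨_, α, rfl⟩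
    ⟨_, by rintro _ ⟨αt, -, rfl⟩; exact neg_le_of_abs_le (abs_Ji_le hq hFb hGb hN t xv _ i)⟩
    ⟨_, by rintro _ ⟨αt, rfl⟩; exact neg_le_of_abs_le (abs_costM_le hq hFb hGb hν t _ αt)⟩
    ?_ ?_
  · rintro _ ⟨αt, hαt, rfl⟩
    exact ⟨_, ⟨αt, rfl⟩, by linarith [(abs_le.1 (hJ hαt)).1]⟩
  · rintro _ ⟨αt, rfl⟩
    set αfix : ℕ → S → (S → ℝ) → A := fun s x _ => αt s x (ν s)
    have hfix : LipCtrl L αfix := fun s x μ' ν' => by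
      simpa [αfix] using mul_nonneg hL (W1_nonneg μ' ν')
    have hcost : costM q F G T ν t (xv i) αfix = costM q F G T ν t (xv i) αt :=
      costM_congr_ctrl (αt := αfix) (αt' := αt) (fun _ _ => rfl) t (xv i)
    exact ⟨_, ⟨αfix, hfix, rfl⟩, by linarith [(abs_le.1 (hJ hfix)).2]⟩

end ValueComparison

end MFGSetValue

/-- Theorem 3.4, convergence of the cost functions.  Assume `q` is
uniformly Lipschitz in `(μ,a)` with constant `L_q` and `F, G` are bounded by `C₀` and
uniformly continuous in `(μ,a)` with modulus `ρ`.  For any `L ≥ 0` there is a modulus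
of continuity `ρ_L` (depending only on `T, |𝕊|, L_q, C₀, ρ, L`) such that
`|J_i(t,x⃗,(α,α̃)_i) − J(t,μ,α;x_i,α̃)| + |v^{N,L}_i(t,x⃗,α) − v(μ^α;t,x_i)| ≤ ρ_L(θ_N)`,
where `θ_N = W₁(μ^N_{x⃗},μ) + 1/√N`. -/
theorem cost_convergence
    {S A : Type*} [Fintype S] [DecidableEq S] [PseudoMetricSpace A]
    (T : ℕ) (Lq C₀ : ℝ) (ρ : ℝ → ℝ)
    (hρmono : Monotone ρ)
    (hρ0 : Filter.Tendsto ρ (nhdsWithin 0 (Set.Ioi 0)) (nhds 0))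
    (L : ℝ) (hL : 0 ≤ L) :
    ∃ ρL : ℝ → ℝ, Monotone ρL ∧
      Filter.Tendsto ρL (nhdsWithin 0 (Set.Ioi 0)) (nhds 0) ∧
      ∀ (q : ℕ → S → (S → ℝ) → A → S → ℝ)
        (F : ℕ → S → (S → ℝ) → A → ℝ) (G : S → (S → ℝ) → ℝ),
        (∀ s x μ a y, IsProb μ → 0 < q s x μ a y ∧ q s x μ a y < 1) →
        (∀ s x μ a, IsProb μ → ∑ y, q s x μ a y = 1) →
        (∀ s x μ ν a b y, IsProb μ → IsProb ν →
          |q s x μ a y - q s x ν b y| ≤ Lq * (W1 μ ν + dist a b)) →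
        (∀ s x μ a, IsProb μ → |F s x μ a| ≤ C₀) →
        (∀ x μ, IsProb μ → |G x μ| ≤ C₀) →
        (∀ s x μ ν a b, IsProb μ → IsProb ν →
          |F s x μ a - F s x ν b| ≤ ρ (W1 μ ν + dist a b)) →
        (∀ x μ ν, IsProb μ → IsProb ν → |G x μ - G x ν| ≤ ρ (W1 μ ν)) →
        ∀ (N : ℕ), 0 < N →
        ∀ (t : ℕ), t ≤ T →
        ∀ (xv : Fin N → S), (∀ x, 0 < emp xv x) →
        ∀ (μ : S → ℝ), IsProb μ → (∀ x, 0 < μ x) →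
        ∀ (α αt : ℕ → S → (S → ℝ) → A), LipCtrl L α → LipCtrl L αt →
        ∀ (i : Fin N),
          |Ji q F G T t xv (replaceI α αt i) i - costM q F G T (flowM q α t μ) t (xv i) αt| +
            |vNi q F G T L t xv α i - valueM q F G T (flowM q α t μ) t (xv i)|
            ≤ ρL (W1 (emp xv) μ + 1 / Real.sqrt N) := by
  set C := max C₀ 0
  refine ⟨fun θ => 2 * (T + 1) * costModulus S T Lq C L ρ θ,
    (monotone_costModulus S T Lq hρmono (le_max_right _ _) hL).const_mul (by positivity),
    by simpa using (tendsto_costModulus S T Lq C hρ0 hL).const_mul (2 * ((T : ℝ) + 1)), ?_⟩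
  intro q F G hq01 hq1 hqLip hFb hGb hFc hGc N hN t htT xv _ μ hμ _ α αt hα hαt i
  have hq : IsTransitionKernel q := fun s x μ a hμ =>
    ⟨fun y => (hq01 s x μ a y hμ).1.le, hq1 s x μ a hμ⟩
  have hFb' : ∀ s x μ a, IsProb μ → |F s x μ a| ≤ C :=
    fun s x μ a hμ => (hFb s x μ a hμ).trans (le_max_left _ _)
  have hGb' : ∀ x μ, IsProb μ → |G x μ| ≤ C := fun x μ hμ => (hGb x μ hμ).trans (le_max_left _ _)
  have hJ := abs_Ji_sub_costM_le hρmono hq hqLip hFb' hGb' hFc hGc (le_max_right _ _) hL hN htT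
    xv hμ hα hαt i le_rfl
  have hv := abs_vNi_sub_valueM_le hρmono hq hqLip hFb' hGb' hFc hGc (le_max_right _ _) hL hN htT
    xv hμ hα i le_rfl
  linarith
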